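/- arXiv:0707.3438 — 2 statements merged into one kernel-verified Lean document; each statement's English description precedes it below -/
import Mathlib

section
/- Let ω satisfy the Diophantine condition |ω·q| ≥ a|q|^{-ν} for all nonzero q ∈ ℤ^d. Define η(t) = t e^{αt} for α > 0 and β_t = (1/2)(1 + 1/(1+t))β for β > 0. Then for every 0 ≤ s ≤ t and every nonzero q with η(t)|ω·q| ≤ 3, one has e^{-(β_s - β_t)|q|} ≤ C e^{-(t-s)a(t)} where a(t) = (β/2)(1+t)^{-2}(a η(t)/3)^{1/ν}, and a(t) → ∞ as t → ∞. -/
open Real Filter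

/-- exponential weight gain from the Diophantine condition. -/
theorem weight_gain_from_diophantine
    (d : ℕ) (ω : Fin d → ℝ) (a ν α β : ℝ)
    (ha : 0 < a) (hν : 0 < ν) (hα : 0 < α) (hβ : 0 < β)
    (hdio : ∀ q : Fin d → ℤ, q ≠ 0 →
      a * ‖(fun i => (q i : ℝ))‖ ^ (-ν) ≤ |∑ i, ω i * q i|) :
    ∃ C > 0,
      (∀ s t : ℝ, 0 ≤ s → s ≤ t → ∀ q : Fin d → ℤ, q ≠ 0 →
        (t * exp (α * t)) * |∑ i, ω i * q i| ≤ 3 →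
        exp (-(((β / 2) * (1 + 1 / (1 + s))) - ((β / 2) * (1 + 1 / (1 + t)))) *
            ‖(fun i => (q i : ℝ))‖)
          ≤ C * exp (-(t - s) *
            ((β / 2) * (1 + t) ^ (-(2:ℝ)) * (a * (t * exp (α * t)) / 3) ^ (1 / ν)))) ∧
      Tendsto (fun t : ℝ =>
          (β / 2) * (1 + t) ^ (-(2:ℝ)) * (a * (t * exp (α * t)) / 3) ^ (1 / ν))
        atTop atTop := by
  refine ⟨1, one_pos, ?_, ?_⟩
  · intro s t hs hst q hq hq3
    have ht : 0 ≤ t := hs.trans hst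
    have h1t : (0:ℝ) < 1 + t := by linarith
    have h1s : (0:ℝ) < 1 + s := by linarith
    have hK0 : (0:ℝ) ≤ a * (t * exp (α * t)) / 3 := by positivity
    have hN0 : (0:ℝ) ≤ ‖(fun i => (q i : ℝ))‖ := norm_nonneg _
    -- key lower bound on ‖q‖
    have hKN : (a * (t * exp (α * t)) / 3) ^ (1 / ν) ≤ ‖(fun i => (q i : ℝ))‖ := by
      rcases eq_or_lt_of_le ht with ht0 | ht0
      · rw [← ht0]
        simp only [zero_mul, mul_zero, zero_div]
        rw [Real.zero_rpow (by positivity)]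
        exact hN0
      · have hη : 0 < t * exp (α * t) := by positivity
        have hqpos : (0:ℝ) < ‖(fun i => (q i : ℝ))‖ := by
          rw [norm_pos_iff]
          intro h
          apply hq
          funext i
          have h2 : ((q i : ℝ)) = 0 := by simpa using congrFun h i
          exact_mod_cast h2
        have hdq := hdio q hq
        have h3 : a * ‖(fun i => (q i : ℝ))‖ ^ (-ν) * (t * exp (α * t)) ≤ 3 := by
          calc a * ‖(fun i => (q i : ℝ))‖ ^ (-ν) * (t * exp (α * t))
              = (t * exp (α * t)) * (a * ‖(fun i => (q i : ℝ))‖ ^ (-ν)) := by ring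
            _ ≤ (t * exp (α * t)) * |∑ i, ω i * q i| := by
                exact mul_le_mul_of_nonneg_left hdq hη.le
            _ ≤ 3 := hq3
        -- so a η / 3 ≤ ‖q‖ ^ ν
        have h4 : a * (t * exp (α * t)) / 3 ≤ ‖(fun i => (q i : ℝ))‖ ^ ν := by
          rw [div_le_iff₀ (by norm_num : (0:ℝ) < 3)]
          have hrν : (0:ℝ) < ‖(fun i => (q i : ℝ))‖ ^ ν := rpow_pos_of_pos hqpos ν
          rw [Real.rpow_neg hqpos.le] at h3
          calc a * (t * exp (α * t))
              = (a * (‖(fun i => (q i : ℝ))‖ ^ ν)⁻¹ * (t * exp (α * t))) *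
                  ‖(fun i => (q i : ℝ))‖ ^ ν := by
                field_simp
            _ ≤ 3 * ‖(fun i => (q i : ℝ))‖ ^ ν := by
                exact mul_le_mul_of_nonneg_right h3 hrν.le
            _ = ‖(fun i => (q i : ℝ))‖ ^ ν * 3 := by ring
        calc (a * (t * exp (α * t)) / 3) ^ (1 / ν)
            ≤ (‖(fun i => (q i : ℝ))‖ ^ ν) ^ (1 / ν) :=
              Real.rpow_le_rpow hK0 h4 (by positivity)
          _ = ‖(fun i => (q i : ℝ))‖ := by
              rw [← Real.rpow_mul hqpos.le, mul_one_div, div_self hν.ne', Real.rpow_one]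
    -- the β inequality
    have hrw : (1 + t) ^ (-(2:ℝ)) = ((1 + t) ^ (2:ℕ))⁻¹ := by
      rw [Real.rpow_neg h1t.le, ← Real.rpow_natCast (1+t) 2]
      norm_num
    have hB0 : 0 ≤ ((β / 2) * (1 + 1 / (1 + s))) - ((β / 2) * (1 + 1 / (1 + t))) := by
      have : 1 / (1 + t) ≤ 1 / (1 + s) := by
        apply one_div_le_one_div_of_le h1s; linarith
      nlinarith
    have h1 : (t - s) * ((β / 2) * (1 + t) ^ (-(2:ℝ)))
        ≤ ((β / 2) * (1 + 1 / (1 + s))) - ((β / 2) * (1 + 1 / (1 + t))) := by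
      rw [hrw]
      have key : (t - s) * ((β / 2) * ((1 + t) ^ (2:ℕ))⁻¹)
          = (β/2) * (t - s) / ((1+t)*(1+t)) := by ring
      rw [key]
      have h2' : (β/2) * (t - s) / ((1+t)*(1+t)) ≤ (β/2) * (t - s) / ((1+s)*(1+t)) := by
        apply div_le_div_of_nonneg_left (by nlinarith) (by positivity)
        nlinarith
      have heq : (β/2) * (t - s) / ((1+s)*(1+t))
          = ((β / 2) * (1 + 1 / (1 + s))) - ((β / 2) * (1 + 1 / (1 + t))) := by
        field_simp
        ring
      linarith [h2', heq.le]
    rw [one_mul, exp_le_exp, neg_mul, neg_mul, neg_le_neg_iff]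
    calc (t - s) * ((β / 2) * (1 + t) ^ (-(2:ℝ)) * (a * (t * exp (α * t)) / 3) ^ (1 / ν))
        = ((t - s) * ((β / 2) * (1 + t) ^ (-(2:ℝ)))) * (a * (t * exp (α * t)) / 3) ^ (1 / ν) := by
          ring
      _ ≤ (((β / 2) * (1 + 1 / (1 + s))) - ((β / 2) * (1 + 1 / (1 + t)))) *
            ‖(fun i => (q i : ℝ))‖ :=
          mul_le_mul h1 hKN (by positivity) hB0
  · -- tendsto part
    have hb : 0 < α * (1 / ν) := by positivity
    have hc : 0 < (β / 2) * (1/4) * (a / 3) ^ (1 / ν) := by positivity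
    have hg : Tendsto (fun t : ℝ =>
        ((β / 2) * (1/4) * (a / 3) ^ (1 / ν)) * (exp ((α * (1/ν)) * t) / t ^ (2:ℝ)))
        atTop atTop :=
      (tendsto_exp_mul_div_rpow_atTop 2 _ hb).const_mul_atTop hc
    apply tendsto_atTop_mono' atTop ?_ hg
    filter_upwards [eventually_ge_atTop (1:ℝ)] with t ht
    have ht0 : (0:ℝ) < t := by linarith
    have h1t : (0:ℝ) < 1 + t := by linarith
    -- (1+t)^(-2) ≥ (1/4) * t^(-2)
    have hpow : (1/4) * (t ^ (2:ℝ))⁻¹ ≤ (1 + t) ^ (-(2:ℝ)) := by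
      rw [Real.rpow_neg h1t.le]
      rw [show (2:ℝ) = ((2:ℕ):ℝ) by norm_num, Real.rpow_natCast, Real.rpow_natCast]
      rw [show (1:ℝ)/4 * ((t ^ (2:ℕ))⁻¹) = 1/(4 * t ^ (2:ℕ)) from by ring,
        show ((1+t) ^ (2:ℕ))⁻¹ = 1/((1+t) ^ (2:ℕ)) from by ring,
        div_le_div_iff₀ (by positivity) (by positivity)]
      nlinarith
    -- (a*(t*exp(αt))/3)^(1/ν) ≥ (a/3)^(1/ν) * exp(α(1/ν) t)
    have hK : (a / 3) ^ (1 / ν) * exp ((α * (1/ν)) * t)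
        ≤ (a * (t * exp (α * t)) / 3) ^ (1 / ν) := by
      have h1 : a * (t * exp (α * t)) / 3 = (a / 3) * (t * exp (α * t)) := by ring
      rw [h1, Real.mul_rpow (by positivity) (by positivity)]
      apply mul_le_mul_of_nonneg_left _ (by positivity)
      have h2 : exp (α * t) ≤ t * exp (α * t) := by
        nlinarith [exp_pos (α * t), ht]
      calc exp ((α * (1/ν)) * t) = exp (α * t) ^ (1/ν) := by
            rw [← Real.exp_mul]; ring_nf
        _ ≤ (t * exp (α * t)) ^ (1/ν) :=
            Real.rpow_le_rpow (exp_pos _).le h2 (by positivity)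
    calc ((β / 2) * (1/4) * (a / 3) ^ (1 / ν)) * (exp ((α * (1/ν)) * t) / t ^ (2:ℝ))
        = (β / 2) * ((1/4) * (t ^ (2:ℝ))⁻¹) * ((a / 3) ^ (1 / ν) * exp ((α * (1/ν)) * t)) := by
          ring
      _ ≤ (β / 2) * (1 + t) ^ (-(2:ℝ)) * (a * (t * exp (α * t)) / 3) ^ (1 / ν) := by
          apply mul_le_mul _ hK (by positivity) (by positivity)
          exact mul_le_mul_of_nonneg_left hpow (by positivity)
end

section
/- Let ω ∈ ℝ^d be Diophantine: |ω·q| ≥ a|q|^{-ν} for all nonzero q ∈ ℤ^d. If u₀ : ℤ^d → ℝ^d satisfies u₀(0) = 0 and Σ_q |u₀(q)| e^{β|q|} ≤ M, then for every t ≥ 0, Σ_{q : η(t)|ω·q| ≤ 3} |u₀(q)| e^{β_t |q|} ≤ M · sup_{0≠q, η(t)|ω·q|≤3} e^{-(β-β_t)|q|} ≤ C M e^{-2t}, where η(t)=t e^{αt}, β_t = (β/2)(1+1/(1+t)), and C depends only on a, ν, α, β. -/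
open Real

set_option maxHeartbeats 2000000 in
/-- superexponential decay of the zeroth kernel on the small-divisor set. -/
theorem u0_decay_on_small_divisor_set
    (d : ℕ) (ω : Fin d → ℝ) (a ν α β : ℝ)
    (ha : 0 < a) (hν : 0 < ν) (hα : 0 < α) (hβ : 0 < β)
    (hdio : ∀ q : Fin d → ℤ, q ≠ 0 →
      a * ‖(fun i => (q i : ℝ))‖ ^ (-ν) ≤ |∑ i, ω i * q i|) :
    ∃ C > 0, ∀ (u₀ : (Fin d → ℤ) → (Fin d → ℝ)) (M : ℝ),
      u₀ 0 = 0 →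
      Summable (fun q : Fin d → ℤ => ‖u₀ q‖ * exp (β * ‖(fun i => (q i : ℝ))‖)) →
      (∑' q : Fin d → ℤ, ‖u₀ q‖ * exp (β * ‖(fun i => (q i : ℝ))‖)) ≤ M →
      ∀ t : ℝ, 0 ≤ t →
        (∑' q : {q : Fin d → ℤ // (t * exp (α * t)) * |∑ i, ω i * q i| ≤ 3},
            ‖u₀ q.1‖ * exp ((β / 2) * (1 + 1 / (1 + t)) * ‖(fun i => ((q.1) i : ℝ))‖))
          ≤ M * sSup {x : ℝ | ∃ q : Fin d → ℤ, q ≠ 0 ∧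
              (t * exp (α * t)) * |∑ i, ω i * q i| ≤ 3 ∧
              x = exp (-(β - (β / 2) * (1 + 1 / (1 + t))) * ‖(fun i => (q i : ℝ))‖)} ∧
        M * sSup {x : ℝ | ∃ q : Fin d → ℤ, q ≠ 0 ∧
              (t * exp (α * t)) * |∑ i, ω i * q i| ≤ 3 ∧
              x = exp (-(β - (β / 2) * (1 + 1 / (1 + t))) * ‖(fun i => (q i : ℝ))‖)}
          ≤ C * M * exp (-2 * t) := by
  have hc0 : (0:ℝ) < (a/3) ^ (1/ν) := Real.rpow_pos_of_pos (by positivity) _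
  set c : ℝ := (a/3) ^ (1/ν) with hcdef
  set T : ℝ := max 1 (32 * ν^2 / (β * c * α^2)) with hTdef
  have hT1 : (1:ℝ) ≤ T := le_max_left _ _
  clear_value c T
  refine ⟨Real.exp (2*T), Real.exp_pos _, ?_⟩
  intro u₀ M hu0 hsum hM t ht
  have h1t : (0:ℝ) < 1 + t := by linarith
  have hβsub : 0 ≤ β - β/2 * (1 + 1/(1+t)) := by
    have hle1 : 1/(1+t) ≤ 1 := by rw [div_le_one h1t]; linarith
    nlinarith
  set S : Set ℝ := {x : ℝ | ∃ q : Fin d → ℤ, q ≠ 0 ∧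
              (t * exp (α * t)) * |∑ i, ω i * q i| ≤ 3 ∧
              x = exp (-(β - (β / 2) * (1 + 1 / (1 + t))) * ‖(fun i => (q i : ℝ))‖)} with hSdef
  have hSnn : 0 ≤ sSup S := by
    apply Real.sSup_nonneg
    rintro x ⟨q, -, -, rfl⟩
    positivity
  have hbdd : BddAbove S := by
    refine ⟨1, ?_⟩
    rintro x ⟨q, -, -, rfl⟩
    exact Real.exp_le_one_iff.mpr
      (mul_nonpos_of_nonpos_of_nonneg (by linarith) (norm_nonneg _))
  have hM0 : 0 ≤ M := le_trans (tsum_nonneg (fun q => by positivity)) hM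
  -- Part 1
  have hsub : Summable (fun qs : {q : Fin d → ℤ // (t * exp (α * t)) * |∑ i, ω i * q i| ≤ 3} =>
      ‖u₀ qs.1‖ * exp (β * ‖(fun i => ((qs.1) i : ℝ))‖)) :=
    hsum.comp_injective Subtype.val_injective
  have key : ∀ qs : {q : Fin d → ℤ // (t * exp (α * t)) * |∑ i, ω i * q i| ≤ 3},
      ‖u₀ qs.1‖ * exp ((β / 2) * (1 + 1 / (1 + t)) * ‖(fun i => ((qs.1) i : ℝ))‖)
        ≤ (‖u₀ qs.1‖ * exp (β * ‖(fun i => ((qs.1) i : ℝ))‖)) * sSup S := by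
    rintro ⟨q, hq3⟩
    by_cases h0 : q = 0
    · subst h0
      simp only [hu0, norm_zero, zero_mul]
      positivity
    · have hmem : exp (-(β - (β / 2) * (1 + 1 / (1 + t))) * ‖(fun i => (q i : ℝ))‖) ∈ S :=
        ⟨q, h0, hq3, rfl⟩
      have hle := le_csSup hbdd hmem
      have hrw : ‖u₀ q‖ * exp ((β / 2) * (1 + 1 / (1 + t)) * ‖(fun i => (q i : ℝ))‖)
          = (‖u₀ q‖ * exp (β * ‖(fun i => (q i : ℝ))‖)) *
            exp (-(β - (β / 2) * (1 + 1 / (1 + t))) * ‖(fun i => (q i : ℝ))‖) := by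
        rw [show (β / 2) * (1 + 1 / (1 + t)) * ‖(fun i => (q i : ℝ))‖
            = β * ‖(fun i => (q i : ℝ))‖
              + -(β - (β / 2) * (1 + 1 / (1 + t))) * ‖(fun i => (q i : ℝ))‖ from by ring,
          Real.exp_add, ← mul_assoc]
      rw [hrw]
      exact mul_le_mul_of_nonneg_left hle (by positivity)
  have hsubβt : Summable (fun qs : {q : Fin d → ℤ // (t * exp (α * t)) * |∑ i, ω i * q i| ≤ 3} =>
      ‖u₀ qs.1‖ * exp ((β / 2) * (1 + 1 / (1 + t)) * ‖(fun i => ((qs.1) i : ℝ))‖)) :=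
    Summable.of_nonneg_of_le (fun q => by positivity) key (hsub.mul_right (sSup S))
  constructor
  · calc (∑' qs : {q : Fin d → ℤ // (t * exp (α * t)) * |∑ i, ω i * q i| ≤ 3},
          ‖u₀ qs.1‖ * exp ((β / 2) * (1 + 1 / (1 + t)) * ‖(fun i => ((qs.1) i : ℝ))‖))
        ≤ ∑' qs : {q : Fin d → ℤ // (t * exp (α * t)) * |∑ i, ω i * q i| ≤ 3},
            (‖u₀ qs.1‖ * exp (β * ‖(fun i => ((qs.1) i : ℝ))‖)) * sSup S :=
          Summable.tsum_le_tsum key hsubβt (hsub.mul_right _)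
      _ = (∑' qs : {q : Fin d → ℤ // (t * exp (α * t)) * |∑ i, ω i * q i| ≤ 3},
            ‖u₀ qs.1‖ * exp (β * ‖(fun i => ((qs.1) i : ℝ))‖)) * sSup S := tsum_mul_right
      _ ≤ M * sSup S := by
          refine mul_le_mul_of_nonneg_right (le_trans ?_ hM) hSnn
          exact Summable.tsum_le_tsum_of_inj Subtype.val Subtype.val_injective
            (fun c _ => by positivity) (fun q => le_rfl) hsub hsum
  -- Part 2
  · have hS2 : sSup S ≤ exp (2*T) * exp (-2*t) := by
      apply Real.sSup_le ?_ (by positivity)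
      rintro x ⟨q, hq0, hq3, rfl⟩
      rw [← Real.exp_add, Real.exp_le_exp]
      by_cases hcase : t ≤ T
      · have h0 : -(β - (β / 2) * (1 + 1 / (1 + t))) * ‖(fun i => (q i : ℝ))‖ ≤ 0 :=
          mul_nonpos_of_nonpos_of_nonneg (by linarith) (norm_nonneg _)
        linarith
      · push_neg at hcase
        have ht1 : (1:ℝ) ≤ t := le_trans hT1 hcase.le
        have htpos : (0:ℝ) < t := by linarith
        have hqne : (fun i => ((q i : ℝ))) ≠ 0 := by
          intro h
          apply hq0
          funext i
          have := congrFun h i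
          simpa using this
        have hN0 : 0 < ‖(fun i => ((q i : ℝ)))‖ := norm_pos_iff.mpr hqne
        set N := ‖(fun i => ((q i : ℝ)))‖ with hNdef
        clear_value N
        have hη : 0 < t * exp (α*t) := by positivity
        have h3 : t * exp (α*t) * (a * N ^ (-ν)) ≤ 3 := by
          rw [hNdef]
          exact le_trans (mul_le_mul_of_nonneg_left (hdio q hq0) hη.le) hq3
        have hPpos : 0 < N ^ ν := Real.rpow_pos_of_pos hN0 ν
        have h3' : t * exp (α*t) * a / (N ^ ν) ≤ 3 := by
          rw [div_eq_mul_inv, mul_assoc, ← Real.rpow_neg hN0.le]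
          exact h3
        rw [div_le_iff₀ hPpos] at h3'
        have h6 : a/3 * (t * exp (α*t)) ≤ N ^ ν := by nlinarith
        have hNlower : c * (t^(1/ν) * exp (α*t/ν)) ≤ N := by
          have h5 : (a/3 * (t * exp (α*t))) ^ (1/ν) ≤ N := by
            calc (a/3 * (t * exp (α*t))) ^ (1/ν) ≤ (N^ν) ^ (1/ν) :=
                  Real.rpow_le_rpow (by positivity) h6 (by positivity)
              _ = N := by
                  rw [← Real.rpow_mul hN0.le, mul_one_div, div_self hν.ne', Real.rpow_one]
          calc c * (t^(1/ν) * exp (α*t/ν))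
              = (a/3 * (t * exp (α*t))) ^ (1/ν) := by
                rw [hcdef, Real.mul_rpow (by positivity) (by positivity),
                  Real.mul_rpow htpos.le (Real.exp_pos _).le,
                  Real.rpow_def_of_pos (Real.exp_pos _), Real.log_exp, mul_one_div]
            _ ≤ N := h5
        -- quadratic lower bound for exp
        have hEF : exp (α*t/ν) = exp (α*t/(2*ν)) * exp (α*t/(2*ν)) := by
          rw [← Real.exp_add]
          congr 1
          field_simp
          ring
        have hF : α*t/(2*ν) + 1 ≤ exp (α*t/(2*ν)) := Real.add_one_le_exp _
        have hF2 : α*t + 2*ν ≤ 2*ν * exp (α*t/(2*ν)) := by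
          have h := mul_le_mul_of_nonneg_left hF (by positivity : (0:ℝ) ≤ 2*ν)
          have heq : 2*ν*(α*t/(2*ν) + 1) = α*t + 2*ν := by field_simp
          linarith [heq ▸ h]
        have hF2' : α*t ≤ 2*ν * exp (α*t/(2*ν)) := by linarith
        have hE' : α^2*t^2 ≤ 4*ν^2 * exp (α*t/ν) := by
          have hsq := mul_self_le_mul_self (by positivity : (0:ℝ) ≤ α*t) hF2'
          rw [hEF]; nlinarith [hsq]
        have hP1 : (1:ℝ) ≤ t^(1/ν) := by
          calc (1:ℝ) = t ^ (0:ℝ) := (Real.rpow_zero t).symm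
            _ ≤ t^(1/ν) := Real.rpow_le_rpow_of_exponent_le ht1 (by positivity)
        have hE0 : 0 < exp (α*t/ν) := Real.exp_pos _
        have s2 : exp (α*t/ν) ≤ t^(1/ν) * exp (α*t/ν) := le_mul_of_one_le_left hE0.le hP1
        have s5 : c * exp (α*t/ν) ≤ c * (t^(1/ν) * exp (α*t/ν)) :=
          mul_le_mul_of_nonneg_left s2 hc0.le
        have s6 : c * exp (α*t/ν) ≤ N := le_trans s5 hNlower
        have s3 : β*c*(α^2*t^2) ≤ β*c*(4*ν^2 * exp (α*t/ν)) :=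
          mul_le_mul_of_nonneg_left hE' (by positivity)
        have hbca : 0 < β*c*α^2 := by positivity
        have hT0' : 32*ν^2 ≤ β*c*α^2*t := by
          have hd : 32*ν^2/(β*c*α^2) ≤ t := by
            rw [hTdef] at hcase
            exact le_trans (le_max_right 1 _) hcase.le
          rw [div_le_iff₀ hbca] at hd
          linarith
        have m1 : 32*ν^2*t ≤ β*c*α^2*t*t := mul_le_mul_of_nonneg_right hT0' htpos.le
        have s7 : (4*ν^2)*(β*(c*exp (α*t/ν))) ≤ (4*ν^2)*(β*N) :=
          mul_le_mul_of_nonneg_left (mul_le_mul_of_nonneg_left s6 hβ.le) (by positivity)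
        have h7 : (4*ν^2)*(8*t) ≤ (4*ν^2)*(β*N) := by nlinarith [m1, s3, s7]
        have h8 : 8*t ≤ β*N := le_of_mul_le_mul_left h7 (by positivity)
        have hA : 1/2 ≤ t/(1+t) := by rw [le_div_iff₀ h1t]; linarith
        have hAX : (1/2)*(β*N) ≤ (t/(1+t))*(β*N) :=
          mul_le_mul_of_nonneg_right hA (by positivity)
        have e1 : β - (β / 2) * (1 + 1 / (1 + t)) = β/2 * (t/(1+t)) := by
          field_simp
          ring
        have hgoal2 : 2*t ≤ (β - (β / 2) * (1 + 1 / (1 + t))) * N := by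
          rw [e1]
          nlinarith [hAX, h8]
        nlinarith [hgoal2, hT1]
    calc M * sSup S ≤ M * (exp (2*T) * exp (-2*t)) := mul_le_mul_of_nonneg_left hS2 hM0
      _ = exp (2*T) * M * exp (-2*t) := by ring
end
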